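/- arXiv:2602.22704 — 3 statements merged into one kernel-verified Lean document; each statement's English description precedes it below -/
import Mathlib

section
/- Let L₁ and L₂ be finite-dimensional Lie algebras over a field F and let L = L₁ × L₂ be their direct sum. Then for every x = (x₁, x₂) ∈ L, sol_L(x) = sol_{L₁}(x₁) × sol_{L₂}(x₂); that is, (y₁, y₂) ∈ sol_L((x₁, x₂)) if and only if y₁ ∈ sol_{L₁}(x₁) and y₂ ∈ sol_{L₂}(x₂). -/
/-! Projections are Lie homomorphisms, so solvability of the span of `{y, x}` passes to each
component. Conversely, that span lies in the image of the product of the two component spans,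
and a product of solvable Lie algebras is solvable. -/

section ProdLie

variable (F : Type*) (L₁ L₂ : Type*) [Field F] [LieRing L₁] [LieAlgebra F L₁]
  [LieRing L₂] [LieAlgebra F L₂]

/-- The componentwise bracket on the product. -/
instance Prod.instBracketProd : Bracket (L₁ × L₂) (L₁ × L₂) :=
  ⟨fun x y => (⁅x.1, y.1⁆, ⁅x.2, y.2⁆)⟩

@[simp] theorem Prod.bracket_def (x y : L₁ × L₂) :
    ⁅x, y⁆ = (⁅x.1, y.1⁆, ⁅x.2, y.2⁆) := rfl

/-- The direct sum (product) of two Lie rings, with componentwise bracket. -/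
instance Prod.instLieRingProd : LieRing (L₁ × L₂) where
  add_lie x y z := by ext <;> simp [add_lie]
  lie_add x y z := by ext <;> simp [lie_add]
  lie_self x := by ext <;> simp
  leibniz_lie x y z := by
    ext <;> simp only [Prod.bracket_def, Prod.fst_add, Prod.snd_add] <;>
      exact leibniz_lie _ _ _

/-- The direct sum (product) of two Lie algebras. -/
instance Prod.instLieAlgebraProd : LieAlgebra F (L₁ × L₂) where
  lie_smul t x y := by ext <;> simp [lie_smul]

end ProdLie

/-- The solvabilizer of `z` in `L`. -/
def solvabilizerElt (F : Type*) {L : Type*} [Field F] [LieRing L] [LieAlgebra F L]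
    (z : L) : Set L :=
  {x : L | LieAlgebra.IsSolvable (LieSubalgebra.lieSpan F L {x, z})}

namespace LieAlgebra

variable {L₁ L₂ : Type*} [LieRing L₁] [LieRing L₂]

instance isSolvable_prod [IsSolvable L₁] [IsSolvable L₂] : IsSolvable (L₁ × L₂) := by
  obtain ⟨k₁, hk₁⟩ := IsSolvable.solvable ℤ L₁
  obtain ⟨k₂, hk₂⟩ := IsSolvable.solvable ℤ L₂
  refine IsSolvable.mk (R := ℤ) (k := max k₁ k₂) <| eq_bot_iff.mpr fun z hz => ?_
  have hz₁ : z.1 ∈ derivedSeries ℤ L₁ k₁ :=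
    derivedSeriesOfIdeal_antitone ⊤ (le_max_left k₁ k₂) <|
      LieIdeal.derivedSeries_map_le (f := LieHom.fst ℤ L₁ L₂) _ (LieIdeal.mem_map hz)
  have hz₂ : z.2 ∈ derivedSeries ℤ L₂ k₂ :=
    derivedSeriesOfIdeal_antitone ⊤ (le_max_right k₁ k₂) <|
      LieIdeal.derivedSeries_map_le (f := LieHom.snd ℤ L₁ L₂) _ (LieIdeal.mem_map hz)
  rw [hk₁, LieSubmodule.mem_bot] at hz₁
  rw [hk₂, LieSubmodule.mem_bot] at hz₂
  exact (LieSubmodule.mem_bot z).mpr (Prod.ext hz₁ hz₂)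

end LieAlgebra

namespace LieSubalgebra

open LieAlgebra

variable {R L L' L₁ L₂ : Type*} [CommRing R] [LieRing L] [LieAlgebra R L] [LieRing L']
  [LieAlgebra R L'] [LieRing L₁] [LieAlgebra R L₁] [LieRing L₂] [LieAlgebra R L₂]

theorem isSolvable_of_le {K K' : LieSubalgebra R L} (h : K ≤ K') [IsSolvable K'] :
    IsSolvable K :=
  (inclusion_injective h).lieAlgebra_isSolvable

theorem isSolvable_lieSpan_image (f : L →ₗ⁅R⁆ L') {s : Set L} [IsSolvable (lieSpan R L s)] :
    IsSolvable (lieSpan R L' (f '' s)) :=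
  isSolvable_of_le (K' := (f.comp (lieSpan R L s).incl).range) <|
    lieSpan_le.mpr <| by
      rintro _ ⟨x, hx, rfl⟩
      exact ⟨⟨x, subset_lieSpan hx⟩, rfl⟩

theorem isSolvable_lieSpan_prod_iff {s : Set (L₁ × L₂)} :
    IsSolvable (lieSpan R (L₁ × L₂) s) ↔
      IsSolvable (lieSpan R L₁ (Prod.fst '' s)) ∧ IsSolvable (lieSpan R L₂ (Prod.snd '' s)) := by
  constructor
  · intro _
    exact ⟨isSolvable_lieSpan_image (LieHom.fst R L₁ L₂),
      isSolvable_lieSpan_image (LieHom.snd R L₁ L₂)⟩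
  · rintro ⟨_, _⟩
    set K₁ := lieSpan R L₁ (Prod.fst '' s)
    set K₂ := lieSpan R L₂ (Prod.snd '' s)
    refine isSolvable_of_le (K' := (K₁.incl.prodMap K₂.incl).range) <|
      lieSpan_le.mpr fun z hz => ?_
    exact ⟨(⟨z.1, subset_lieSpan ⟨z, hz, rfl⟩⟩, ⟨z.2, subset_lieSpan ⟨z, hz, rfl⟩⟩), rfl⟩

end LieSubalgebra

theorem solvabilizerElt_prod_general (F L₁ L₂ : Type*) [Field F]
    [LieRing L₁] [LieAlgebra F L₁] [LieRing L₂] [LieAlgebra F L₂] (x : L₁ × L₂) :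
    solvabilizerElt F x = solvabilizerElt F x.1 ×ˢ solvabilizerElt F x.2 := by
  ext y
  simp only [solvabilizerElt, Set.mem_prod, Set.mem_ofPred_eq]
  rw [LieSubalgebra.isSolvable_lieSpan_prod_iff, Set.image_pair, Set.image_pair]

/-- The solvabilizer of an element of a direct sum is the product of the
componentwise solvabilizers. -/
theorem solvabilizerElt_prod (F L₁ L₂ : Type*) [Field F]
    [LieRing L₁] [LieAlgebra F L₁] [LieRing L₂] [LieAlgebra F L₂]
    [Module.Finite F L₁] [Module.Finite F L₂] (x : L₁ × L₂) :
    solvabilizerElt F x = solvabilizerElt F x.1 ×ˢ solvabilizerElt F x.2 :=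
  solvabilizerElt_prod_general F L₁ L₂ x
end

section
/- Let 0 → A →^α B →^β C → 0 be a short exact sequence of Lie algebras over a field F (α an injective Lie algebra homomorphism, β a surjective Lie algebra homomorphism, and the range of α equals the kernel of β). Then β(sol(B)) ⊆ sol(C), and every x ∈ sol(B) with β(x) = 0 lies in α(sol(A)); that is, ker(β|_{sol(B)}) ⊆ α(sol(A)). -/
/-! A Lie homomorphism `f` maps `lieSpan {x, z}` onto `lieSpan {f x, f z}`. Since homomorphic
images of solvable Lie algebras are solvable, a surjection maps the solvabilizer into the
solvabilizer; since an injection identifies `lieSpan {a, z}` with its image, it reflects membership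
in the solvabilizer. -/

/-- The solvabilizer of the Lie algebra `L`. -/
def solvabilizerAlg (F L : Type*) [Field F] [LieRing L] [LieAlgebra F L] : Set L :=
  {x : L | ∀ z : L, LieAlgebra.IsSolvable (LieSubalgebra.lieSpan F L {x, z})}

namespace LieSubalgebra

variable {R L L' : Type*} [CommRing R] [LieRing L] [LieAlgebra R L] [LieRing L'] [LieAlgebra R L']

theorem map_eq_range_comp_incl (f : L →ₗ⁅R⁆ L') (K : LieSubalgebra R L) :
    K.map f = (f.comp K.incl).range := by
  ext y
  simp [LieHom.mem_range]

instance isSolvable_map (f : L →ₗ⁅R⁆ L') (K : LieSubalgebra R L) [LieAlgebra.IsSolvable K] :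
    LieAlgebra.IsSolvable (K.map f) := by
  rw [map_eq_range_comp_incl]
  infer_instance

theorem isSolvable_of_isSolvable_map {f : L →ₗ⁅R⁆ L'} (hf : Function.Injective f)
    (K : LieSubalgebra R L) [LieAlgebra.IsSolvable (K.map f)] : LieAlgebra.IsSolvable K :=
  (LieAlgebra.solvable_iff_equiv_solvable (equivMapOfInjective f K hf)).mpr ‹_›

theorem map_lieSpan_pair (f : L →ₗ⁅R⁆ L') (x y : L) :
    (lieSpan R L {x, y}).map f = lieSpan R L' {f x, f y} := by
  rw [map_lieSpan, Set.image_pair]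

end LieSubalgebra

section

open LieSubalgebra

variable {F L L' : Type*} [Field F] [LieRing L] [LieAlgebra F L] [LieRing L'] [LieAlgebra F L']

theorem image_solvabilizerAlg_subset {f : L →ₗ⁅F⁆ L'} (hf : Function.Surjective f) :
    f '' solvabilizerAlg F L ⊆ solvabilizerAlg F L' := by
  rintro _ ⟨x, hx, rfl⟩ z
  obtain ⟨w, rfl⟩ := hf z
  have := hx w
  rw [← map_lieSpan_pair]
  infer_instance

theorem mem_solvabilizerAlg_of_map_mem {f : L →ₗ⁅F⁆ L'} (hf : Function.Injective f) {x : L}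
    (hx : f x ∈ solvabilizerAlg F L') : x ∈ solvabilizerAlg F L := fun z ↦ by
  have := hx (f z)
  rw [← map_lieSpan_pair] at this
  exact isSolvable_of_isSolvable_map hf _

end

/-- For a short exact sequence `0 → A → B → C → 0` of Lie algebras, `β(sol(B)) ⊆ sol(C)`
and the kernel of `β` restricted to `sol(B)` is contained in `α(sol(A))`. -/
theorem solvabilizer_short_exact (F A B C : Type*) [Field F]
    [LieRing A] [LieAlgebra F A] [LieRing B] [LieAlgebra F B] [LieRing C] [LieAlgebra F C]
    (α : A →ₗ⁅F⁆ B) (β : B →ₗ⁅F⁆ C)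
    (hinj : Function.Injective α) (hsurj : Function.Surjective β)
    (hexact : Set.range α = {x : B | β x = 0}) :
    β '' solvabilizerAlg F B ⊆ solvabilizerAlg F C ∧
      ∀ x ∈ solvabilizerAlg F B, β x = 0 → x ∈ α '' solvabilizerAlg F A := by
  refine ⟨image_solvabilizerAlg_subset hsurj, fun x hx hβx ↦ ?_⟩
  obtain ⟨a, rfl⟩ : x ∈ Set.range α := hexact ▸ hβx
  exact ⟨a, mem_solvabilizerAlg_of_map_mem hinj hx, rfl⟩
end

section
/- Let f : L → M and g : N → M be surjective Lie algebra homomorphisms between finite-dimensional Lie algebras over a field F, and let P = {(x, y) ∈ L × N | f(x) = g(y)} be the fiber product, a Lie subalgebra of the product Lie algebra L × N. Then, regarding P as a Lie algebra, an element (x, y) ∈ P belongs to sol(P) if and only if x ∈ sol(L) and y ∈ sol(N). -/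
/-- The fiber product `L ×_M N` of two Lie algebra homomorphisms `f : L → M` and
`g : N → M`, as a Lie subalgebra of the product Lie algebra `L × N`. -/
def fiberProduct (F : Type*) {L M N : Type*} [Field F]
    [LieRing L] [LieAlgebra F L] [LieRing M] [LieAlgebra F M] [LieRing N] [LieAlgebra F N]
    (f : L →ₗ⁅F⁆ M) (g : N →ₗ⁅F⁆ M) : LieSubalgebra F (L × N) where
  carrier := {p : L × N | f p.1 = g p.2}
  add_mem' := by
    intro a b ha hb
    show f (a.1 + b.1) = g (a.2 + b.2)
    rw [map_add f, map_add g, ha, hb]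
  zero_mem' := by simp
  smul_mem' := by
    intro c p hp
    show f (c • p.1) = g (c • p.2)
    rw [map_smul f, map_smul g]
    exact congrArg _ hp
  lie_mem' := by
    intro p q hp hq
    show f ⁅p.1, q.1⁆ = g ⁅p.2, q.2⁆
    rw [LieHom.map_lie, LieHom.map_lie, hp, hq]

section Solvable

variable {R L L₁ L₂ : Type*} [CommRing R] [LieRing L] [LieAlgebra R L]
  [LieRing L₁] [LieAlgebra R L₁] [LieRing L₂] [LieAlgebra R L₂]

theorem LieHom.range_comp_incl (f : L →ₗ⁅R⁆ L₁) (K : LieSubalgebra R L) :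
    (f.comp K.incl).range = K.map f := by
  ext
  simp

theorem LieHom.ker_rangeRestrict (f : L →ₗ⁅R⁆ L₁) : f.rangeRestrict.ker = f.ker := by
  ext
  simp [LieHom.rangeRestrict_apply, Subtype.ext_iff]

instance LieSubalgebra.isSolvable_map_s15 (K : LieSubalgebra R L) [LieAlgebra.IsSolvable K]
    (f : L →ₗ⁅R⁆ L₁) : LieAlgebra.IsSolvable (K.map f) :=
  f.range_comp_incl K ▸ inferInstance

theorem LieHom.exists_derivedSeries_le_ker (f : L →ₗ⁅R⁆ L₁) [LieAlgebra.IsSolvable f.range] :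
    ∃ k, LieAlgebra.derivedSeries R L k ≤ f.ker := by
  obtain ⟨k, hk⟩ := LieAlgebra.IsSolvable.solvable R f.range
  refine ⟨k, ?_⟩
  rw [← f.ker_rangeRestrict, ← LieIdeal.map_eq_bot_iff,
    LieIdeal.derivedSeries_map_eq k f.surjective_rangeRestrict, hk]

theorem LieAlgebra.isSolvable_of_ker_inf_ker_eq_bot (f₁ : L →ₗ⁅R⁆ L₁) (f₂ : L →ₗ⁅R⁆ L₂)
    [IsSolvable f₁.range] [IsSolvable f₂.range] (h : f₁.ker ⊓ f₂.ker = ⊥) : IsSolvable L := by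
  obtain ⟨k₁, hk₁⟩ := f₁.exists_derivedSeries_le_ker
  obtain ⟨k₂, hk₂⟩ := f₂.exists_derivedSeries_le_ker
  refine (isSolvable_iff R L).mpr ⟨max k₁ k₂, eq_bot_iff.mpr (h ▸ le_inf ?_ ?_)⟩
  · exact (derivedSeriesOfIdeal_antitone ⊤ (le_max_left k₁ k₂)).trans hk₁
  · exact (derivedSeriesOfIdeal_antitone ⊤ (le_max_right k₁ k₂)).trans hk₂

theorem LieSubalgebra.isSolvable_of_isSolvable_map_s15 (K : LieSubalgebra R L) (f₁ : L →ₗ⁅R⁆ L₁)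
    (f₂ : L →ₗ⁅R⁆ L₂) [LieAlgebra.IsSolvable (K.map f₁)] [LieAlgebra.IsSolvable (K.map f₂)]
    (h : f₁.ker ⊓ f₂.ker = ⊥) : LieAlgebra.IsSolvable K := by
  have : LieAlgebra.IsSolvable (f₁.comp K.incl).range := f₁.range_comp_incl K ▸ inferInstance
  have : LieAlgebra.IsSolvable (f₂.comp K.incl).range := f₂.range_comp_incl K ▸ inferInstance
  refine LieAlgebra.isSolvable_of_ker_inf_ker_eq_bot (f₁.comp K.incl) (f₂.comp K.incl) ?_
  refine (LieSubmodule.eq_bot_iff _).mpr fun x ⟨hx₁, hx₂⟩ => Subtype.ext ?_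
  have : (x : L) ∈ f₁.ker ⊓ f₂.ker := ⟨hx₁, hx₂⟩
  rwa [h, LieSubmodule.mem_bot] at this

end Solvable

section Solvabilizer

variable {F L L₁ L₂ : Type*} [Field F] [LieRing L] [LieAlgebra F L]
  [LieRing L₁] [LieAlgebra F L₁] [LieRing L₂] [LieAlgebra F L₂]

theorem map_mem_solvabilizerAlg {φ : L →ₗ⁅F⁆ L₁} (hφ : Function.Surjective φ) {x : L}
    (hx : x ∈ solvabilizerAlg F L) : φ x ∈ solvabilizerAlg F L₁ := by
  intro z
  obtain ⟨y, rfl⟩ := hφ z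
  have := hx y
  rw [← Set.image_pair, ← LieSubalgebra.map_lieSpan]
  infer_instance

theorem mem_solvabilizerAlg_of_ker_inf_ker_eq_bot (φ₁ : L →ₗ⁅F⁆ L₁) (φ₂ : L →ₗ⁅F⁆ L₂)
    (h : φ₁.ker ⊓ φ₂.ker = ⊥) {x : L} (h₁ : φ₁ x ∈ solvabilizerAlg F L₁)
    (h₂ : φ₂ x ∈ solvabilizerAlg F L₂) : x ∈ solvabilizerAlg F L := by
  intro z
  have h₁z := h₁ (φ₁ z)
  have h₂z := h₂ (φ₂ z)
  rw [← Set.image_pair, ← LieSubalgebra.map_lieSpan] at h₁z h₂z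
  exact LieSubalgebra.isSolvable_of_isSolvable_map_s15 _ φ₁ φ₂ h

end Solvabilizer

namespace fiberProduct

variable {F L M N : Type*} [Field F]
  [LieRing L] [LieAlgebra F L] [LieRing M] [LieAlgebra F M] [LieRing N] [LieAlgebra F N]
  (f : L →ₗ⁅F⁆ M) (g : N →ₗ⁅F⁆ M)

def fst : fiberProduct F f g →ₗ⁅F⁆ L := (LieHom.fst F L N).comp (fiberProduct F f g).incl

def snd : fiberProduct F f g →ₗ⁅F⁆ N := (LieHom.snd F L N).comp (fiberProduct F f g).incl

theorem fst_surjective (hg : Function.Surjective g) : Function.Surjective (fst f g) := by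
  intro x
  obtain ⟨y, hy⟩ := hg (f x)
  exact ⟨⟨(x, y), hy.symm⟩, rfl⟩

theorem snd_surjective (hf : Function.Surjective f) : Function.Surjective (snd f g) := by
  intro y
  obtain ⟨x, hx⟩ := hf (g y)
  exact ⟨⟨(x, y), hx⟩, rfl⟩

theorem ker_fst_inf_ker_snd : (fst f g).ker ⊓ (snd f g).ker = ⊥ :=
  (LieSubmodule.eq_bot_iff _).mpr fun _ ⟨hp₁, hp₂⟩ => Subtype.ext (Prod.ext hp₁ hp₂)

end fiberProduct

theorem solvabilizer_fiberProduct_general (F L M N : Type*) [Field F]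
    [LieRing L] [LieAlgebra F L] [LieRing M] [LieAlgebra F M] [LieRing N] [LieAlgebra F N]
    (f : L →ₗ⁅F⁆ M) (g : N →ₗ⁅F⁆ M)
    (hf : Function.Surjective f) (hg : Function.Surjective g)
    (p : fiberProduct F f g) :
    p ∈ solvabilizerAlg F (fiberProduct F f g) ↔
      (p : L × N).1 ∈ solvabilizerAlg F L ∧ (p : L × N).2 ∈ solvabilizerAlg F N :=
  ⟨fun hp => ⟨map_mem_solvabilizerAlg (fiberProduct.fst_surjective f g hg) hp,
      map_mem_solvabilizerAlg (fiberProduct.snd_surjective f g hf) hp⟩,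
    fun ⟨h₁, h₂⟩ => mem_solvabilizerAlg_of_ker_inf_ker_eq_bot _ _
      (fiberProduct.ker_fst_inf_ker_snd f g) h₁ h₂⟩

/-- An element of the fiber product is in its solvabilizer iff its components lie in the
solvabilizers of the factors. -/
theorem solvabilizer_fiberProduct (F L M N : Type*) [Field F]
    [LieRing L] [LieAlgebra F L] [LieRing M] [LieAlgebra F M] [LieRing N] [LieAlgebra F N]
    [Module.Finite F L] [Module.Finite F M] [Module.Finite F N]
    (f : L →ₗ⁅F⁆ M) (g : N →ₗ⁅F⁆ M)
    (hf : Function.Surjective f) (hg : Function.Surjective g)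
    (p : fiberProduct F f g) :
    p ∈ solvabilizerAlg F (fiberProduct F f g) ↔
      (p : L × N).1 ∈ solvabilizerAlg F L ∧ (p : L × N).2 ∈ solvabilizerAlg F N :=
  solvabilizer_fiberProduct_general F L M N f g hf hg p
end
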